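/- arXiv:1001.0150 — 4 statements merged into one kernel-verified Lean document; each statement's English description precedes it below -/
import Mathlib

section
/- The metric space (R^n, D) with D(x,y) = max_i |x_i-y_i|^{α_1/α_i}, equipped with Lebesgue measure on R^n, is Ahlfors Q-regular with Q = Σ_{i=1}^r n_i α_i/α_1. -/
open MeasureTheory ENNReal Metric Module

/-!
The `D`-ball of radius `s` about `x` is the product of the Euclidean balls about `x i` of
radii `s ^ (α i / α₁)`. Lebesgue measure of a product of balls is the product of their measures,
and the ball of radius `ρ` in `ℝ^m` has measure `ρ ^ m` times that of the unit ball, so the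
`D`-ball has measure exactly `K * s ^ Q`, where `K` is the product of the unit-ball volumes.
-/

theorem setOf_sup'_norm_rpow_lt_eq_pi_ball {ι : Type*} [Fintype ι] (hι : Finset.univ.Nonempty)
    {E : ι → Type*} [∀ i, SeminormedAddCommGroup (E i)] {p : ι → ℝ} (hp : ∀ i, 0 < p i)
    (x : ∀ i, E i) {s : ℝ} (hs : 0 ≤ s) :
    {y | Finset.univ.sup' hι (fun i => ‖x i - y i‖ ^ p i) < s} =
      Set.univ.pi fun i => ball (x i) (s ^ (p i)⁻¹) := by
  ext y
  simp only [Set.mem_ofPred_eq, Finset.sup'_lt_iff, Finset.mem_univ, true_imp_iff, Set.mem_pi,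
    Set.mem_univ, mem_ball, dist_comm (y _), dist_eq_norm]
  exact forall_congr' fun i => (Real.lt_rpow_inv_iff_of_pos (norm_nonneg _) hs (hp i)).symm

theorem measure_pi_pi_ball {ι : Type*} [Fintype ι] {E : ι → Type*}
    [∀ i, NormedAddCommGroup (E i)] [∀ i, NormedSpace ℝ (E i)] [∀ i, MeasurableSpace (E i)]
    [∀ i, BorelSpace (E i)] [∀ i, FiniteDimensional ℝ (E i)] (μ : ∀ i, Measure (E i))
    [∀ i, (μ i).IsAddHaarMeasure] (x : ∀ i, E i) {ρ : ι → ℝ} (hρ : ∀ i, 0 < ρ i) :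
    Measure.pi μ (Set.univ.pi fun i => ball (x i) (ρ i)) =
      ENNReal.ofReal (∏ i, ρ i ^ finrank ℝ (E i)) * ∏ i, μ i (ball 0 1) := by
  rw [Measure.pi_pi, ENNReal.ofReal_prod_of_nonneg fun i _ => pow_nonneg (hρ i).le _,
    ← Finset.prod_mul_distrib]
  exact Finset.prod_congr rfl fun i _ => Measure.addHaar_ball_of_pos (μ i) (x i) (hρ i)

theorem prod_rpow_pow_eq_rpow_sum {ι : Type*} [Fintype ι] {s : ℝ} (hs : 0 < s) (a : ι → ℝ)
    (m : ι → ℕ) : ∏ i, (s ^ a i) ^ m i = s ^ ∑ i, (m i : ℝ) * a i := by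
  rw [Real.rpow_sum_of_pos hs]
  refine Finset.prod_congr rfl fun i _ => ?_
  rw [← Real.rpow_natCast, ← Real.rpow_mul hs.le, mul_comm]

theorem ENNReal.exists_one_le_ofReal_inv_mul_le_and_le_ofReal_mul {K : ℝ≥0∞} (h₀ : K ≠ 0)
    (h_top : K ≠ ⊤) :
    ∃ C : ℝ, 1 ≤ C ∧ ∀ t : ℝ, 0 ≤ t →
      ENNReal.ofReal (C⁻¹ * t) ≤ ENNReal.ofReal t * K ∧
      ENNReal.ofReal t * K ≤ ENNReal.ofReal (C * t) := by
  obtain ⟨k, hk, rfl⟩ : ∃ k, 0 < k ∧ K = ENNReal.ofReal k :=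
    ⟨K.toReal, ENNReal.toReal_pos h₀ h_top, (ENNReal.ofReal_toReal h_top).symm⟩
  refine ⟨max k k⁻¹, ?_, fun t ht => ?_⟩
  · rcases le_total 1 k with h | h
    · exact le_max_of_le_left h
    · exact le_max_of_le_right (one_le_inv_iff₀.mpr ⟨hk, h⟩)
  rw [← ENNReal.ofReal_mul ht, mul_comm t]
  constructor <;> refine ENNReal.ofReal_le_ofReal (mul_le_mul_of_nonneg_right ?_ ht)
  · exact inv_le_of_inv_le₀ hk (le_max_right _ _)
  · exact le_max_left _ _

/-- `(R^n, D)` with `D(x,y) = max_i |x_i - y_i|^{α₁/α_i}` (`0 < α₁ ≤ ... ≤ α_r`),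
equipped with Lebesgue measure, is Ahlfors `Q`-regular with
`Q = Σ_i n_i α_i / α₁`. -/
theorem stmt_6 (r : ℕ) (hr : 0 < r) (n : Fin r → ℕ) (α : Fin r → ℝ)
    (hα0 : 0 < α ⟨0, hr⟩) (hmono : Monotone α) :
    let D : (∀ i, EuclideanSpace ℝ (Fin (n i))) →
        (∀ i, EuclideanSpace ℝ (Fin (n i))) → ℝ :=
      fun x y => Finset.univ.sup' ⟨⟨0, hr⟩, Finset.mem_univ _⟩
        (fun i => ‖x i - y i‖ ^ (α ⟨0, hr⟩ / α i))
    let Q : ℝ := ∑ i, (n i : ℝ) * α i / α ⟨0, hr⟩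
    ∃ C : ℝ, 1 ≤ C ∧ ∀ (x : ∀ i, EuclideanSpace ℝ (Fin (n i))) (s : ℝ), 0 < s →
      ENNReal.ofReal (C⁻¹ * s ^ Q) ≤ volume {y | D x y < s} ∧
      volume {y | D x y < s} ≤ ENNReal.ofReal (C * s ^ Q) := by
  intro D Q
  have hα : ∀ i, 0 < α i := fun i => hα0.trans_le (hmono (Nat.zero_le i.val))
  set K := ∏ i, volume (ball (0 : EuclideanSpace ℝ (Fin (n i))) 1)
  have hK₀ : K ≠ 0 := Finset.prod_ne_zero_iff.mpr fun i _ => (measure_ball_pos _ _ one_pos).ne'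
  have hK_top : K ≠ ⊤ := ENNReal.prod_ne_top fun i _ => measure_ball_lt_top.ne
  obtain ⟨C, hC, hCK⟩ := ENNReal.exists_one_le_ofReal_inv_mul_le_and_le_ofReal_mul hK₀ hK_top
  refine ⟨C, hC, fun x s hs => ?_⟩
  have hvol : volume {y | D x y < s} = ENNReal.ofReal (s ^ Q) * K := by
    rw [show {y | D x y < s} = _ from
        setOf_sup'_norm_rpow_lt_eq_pi_ball _ (fun i => div_pos hα0 (hα i)) x hs.le,
      volume_pi, measure_pi_pi_ball _ x fun i => Real.rpow_pos_of_pos hs _]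
    simp only [finrank_euclideanSpace_fin, inv_div]
    rw [prod_rpow_pow_eq_rpow_sum hs]
    simp only [Q, K, mul_div_assoc]
  rw [hvol]
  exact hCK _ (Real.rpow_nonneg hs.le _)
end

section
/- Let (X,d) be a metric space and p ∈ X, and suppose d_p is a metric on X \ {p} satisfying d(x,y)/(4 d(x,p) d(y,p)) ≤ d_p(x,y) ≤ d(x,y)/(d(x,p) d(y,p)) for all x,y ≠ p. If f: (X,d) → (Y,d) is an η̃-quasimöbius embedding, then f: (X \ {p}, d_p) → (Y \ {f(p)}, d_{f(p)}) is η'-quasisymmetric with η'(t) = 4·η̃(4t), where d_{f(p)} is a metric on Y \ {f(p)} satisfying the analogous inequalities. -/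
/-!
A metric inversion at `q` distorts the ratio `D(a,c) / D(b,c)` by at most a factor `4`
relative to the cross ratio `[a, b, c, q]`, because the factors `d(c,q)` cancel. Applying this
in `Y` at `f p`, then the quasimöbius bound to the quadruple `(x, y, z, p)`, then the reverse
estimate in `X` at `p` gives the quasisymmetry bound.
-/

open NNReal

/-- `f` is an `η`-quasimöbius embedding: for four distinct points, the image
cross ratio is controlled by `η` of the cross ratio. -/
def IsQM {X Y : Type*} [MetricSpace X] [MetricSpace Y]
    (η : ℝ≥0 → ℝ≥0) (f : X → Y) : Prop :=
  ∀ x₁ x₂ x₃ x₄ : X, x₁ ≠ x₂ → x₁ ≠ x₃ → x₁ ≠ x₄ → x₂ ≠ x₃ → x₂ ≠ x₄ → x₃ ≠ x₄ →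
    nndist (f x₁) (f x₃) * nndist (f x₂) (f x₄) /
        (nndist (f x₁) (f x₄) * nndist (f x₂) (f x₃)) ≤
      η (nndist x₁ x₃ * nndist x₂ x₄ / (nndist x₁ x₄ * nndist x₂ x₃))

/-- The cross ratio in the convention of `IsQM`. -/
noncomputable def crossRatio {Z : Type*} [MetricSpace Z] (a b c d : Z) : ℝ≥0 :=
  nndist a c * nndist b d / (nndist a d * nndist b c)

def IsMetricInversion {Z : Type*} [MetricSpace Z] (D : Z → Z → ℝ≥0) (q : Z) : Prop :=
  ∀ x y : Z, x ≠ q → y ≠ q →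
    nndist x y / (4 * nndist x q * nndist y q) ≤ D x y ∧
    D x y ≤ nndist x y / (nndist x q * nndist y q)

lemma nndist_pos_of_ne {Z : Type*} [MetricSpace Z] {a b : Z} (h : a ≠ b) : 0 < nndist a b :=
  pos_iff_ne_zero.mpr (mt nndist_eq_zero.mp h)

namespace IsMetricInversion

variable {Z : Type*} [MetricSpace Z] {D : Z → Z → ℝ≥0} {q : Z}

lemma ratio_le_four_mul_crossRatio (hD : IsMetricInversion D q) {a b c : Z}
    (ha : a ≠ q) (hb : b ≠ q) (hc : c ≠ q) (hbc : b ≠ c) :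
    D a c / D b c ≤ 4 * crossRatio a b c q := by
  have hbc' := nndist_pos_of_ne hbc
  have hbq := nndist_pos_of_ne hb
  have hcq := nndist_pos_of_ne hc
  have haq := nndist_pos_of_ne ha
  calc D a c / D b c
      ≤ (nndist a c / (nndist a q * nndist c q)) /
          (nndist b c / (4 * nndist b q * nndist c q)) := by
        gcongr
        exacts [(hD a c ha hc).2, (hD b c hb hc).1]
    _ = 4 * crossRatio a b c q := by
        unfold crossRatio
        field_simp

lemma crossRatio_le_four_mul_ratio (hD : IsMetricInversion D q) {a b c : Z}
    (ha : a ≠ q) (hb : b ≠ q) (hc : c ≠ q) (hbc : b ≠ c) :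
    crossRatio a b c q ≤ 4 * (D a c / D b c) := by
  have hbc' := nndist_pos_of_ne hbc
  have hbq := nndist_pos_of_ne hb
  have hcq := nndist_pos_of_ne hc
  have haq := nndist_pos_of_ne ha
  have hDbc : 0 < D b c :=
    (by positivity : 0 < nndist b c / (4 * nndist b q * nndist c q)).trans_le (hD b c hb hc).1
  calc crossRatio a b c q
      = 4 * ((nndist a c / (4 * nndist a q * nndist c q)) /
          (nndist b c / (nndist b q * nndist c q))) := by
        unfold crossRatio
        field_simp
    _ ≤ 4 * (D a c / D b c) := by
        gcongr
        exacts [(hD a c ha hc).1, (hD b c hb hc).2]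

end IsMetricInversion

/-- Metric inversion turns quasimöbius embeddings into quasisymmetric ones:
if `d_p` (resp. `d_{f(p)}`) is a metric inversion of `X` at `p` (resp. of `Y`
at `f(p)`), i.e. agrees with `d(x,y)/(d(x,p)d(y,p))` up to the factors `1/4`
and `1`, and `f` is `η̃`-quasimöbius, then `f : (X \ {p}, d_p) → (Y \ {f p},
d_{f p})` is `η'`-quasisymmetric with `η'(t) = 4 η̃(4t)`. -/
theorem stmt_11 {X Y : Type*} [MetricSpace X] [MetricSpace Y]
    (η : ℝ≥0 ≃o ℝ≥0) (f : X → Y) (hinj : Function.Injective f)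
    (hf : IsQM (⇑η) f)
    (p : X) (dp : X → X → ℝ≥0) (dq : Y → Y → ℝ≥0)
    (hdp : ∀ x y : X, x ≠ p → y ≠ p →
      nndist x y / (4 * nndist x p * nndist y p) ≤ dp x y ∧
      dp x y ≤ nndist x y / (nndist x p * nndist y p))
    (hdq : ∀ x y : Y, x ≠ f p → y ≠ f p →
      nndist x y / (4 * nndist x (f p) * nndist y (f p)) ≤ dq x y ∧
      dq x y ≤ nndist x y / (nndist x (f p) * nndist y (f p))) :
    ∀ x y z : X, x ≠ p → y ≠ p → z ≠ p → x ≠ y → x ≠ z → y ≠ z →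
      dq (f x) (f z) / dq (f y) (f z) ≤ 4 * η (4 * (dp x z / dp y z)) := by
  intro x y z hxp hyp hzp hxy hxz hyz
  have hdp : IsMetricInversion dp p := hdp
  have hdq : IsMetricInversion dq (f p) := hdq
  calc dq (f x) (f z) / dq (f y) (f z)
      ≤ 4 * crossRatio (f x) (f y) (f z) (f p) :=
        hdq.ratio_le_four_mul_crossRatio (hinj.ne hxp) (hinj.ne hyp) (hinj.ne hzp)
          (hinj.ne hyz)
    _ ≤ 4 * η (crossRatio x y z p) := by gcongr; exact hf x y z p hxy hxz hxp hyz hyp hzp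
    _ ≤ 4 * η (4 * (dp x z / dp y z)) := by
        gcongr
        exact hdp.crossRatio_le_four_mul_ratio hxp hyp hzp hyz
end

section
/- Let p, q ∈ R^n ≅ ∂G_A \ {ξ₀} with D_e(p,q) = e^{t₀}, and let t₁ ≥ t₀ or t₂ ≥ t₀. Then |t₁ - t₂| ≤ d((p,t₁),(q,t₂)) ≤ |t₁ - t₂| + 1 in G_A. -/
/-!
The height coordinate of a path moves no faster than the path itself, which gives the lower
bound. For the upper bound, rise from the lower endpoint to height `m = max t₁ t₂ ≥ t₀`, cross
along the horosphere at height `m`, where `|e^{-mA}(p - q)| ≤ |e^{-t₀A}(p - q)| = 1`, and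
descend; reparametrising each leg by a smooth transition supported in its own third of `[0, 1]`
makes the concatenation C¹ without changing the lengths.
-/

open MeasureTheory

/-- The length of a C¹ path in `G_A = R^n ⋊_A R` for the left invariant
Riemannian metric whose quadratic form at `(x,t)` is `diag(e^{-2tA}, 1)`. -/
noncomputable def pathLength (r : ℕ) (n : Fin r → ℕ) (α : Fin r → ℝ)
    (c : ℝ → (∀ i, EuclideanSpace ℝ (Fin (n i))) × ℝ)
    (v : ℝ → (∀ i, EuclideanSpace ℝ (Fin (n i))) × ℝ) : ℝ :=
  ∫ s in (0:ℝ)..1,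
    Real.sqrt ((∑ i, Real.exp (-2 * (c s).2 * α i) * ‖(v s).1 i‖ ^ 2) +
      ((v s).2) ^ 2)

/-- The Riemannian distance on `G_A`: infimum of lengths of C¹ paths. -/
noncomputable def gdist (r : ℕ) (n : Fin r → ℕ) (α : Fin r → ℝ)
    (x y : (∀ i, EuclideanSpace ℝ (Fin (n i))) × ℝ) : ℝ :=
  sInf {L : ℝ | ∃ c v, c 0 = x ∧ c 1 = y ∧
    (∀ s ∈ Set.Icc (0:ℝ) 1, HasDerivAt c (v s) s) ∧ Continuous v ∧
    L = pathLength r n α c v}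

open intervalIntegral Set Real

/-- `|e^{-tA} x|²`: the squared length of `x` in the horosphere at height `t`. -/
noncomputable def horoNormSq {r : ℕ} {n : Fin r → ℕ} (α : Fin r → ℝ)
    (x : ∀ i, EuclideanSpace ℝ (Fin (n i))) (t : ℝ) : ℝ :=
  ∑ i, exp (-2 * t * α i) * ‖x i‖ ^ 2

section Horosphere

variable {r : ℕ} {n : Fin r → ℕ} (α : Fin r → ℝ)

lemma horoNormSq_nonneg (x : ∀ i, EuclideanSpace ℝ (Fin (n i))) (t : ℝ) :
    0 ≤ horoNormSq α x t := by
  unfold horoNormSq; positivity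

lemma horoNormSq_smul (a : ℝ) (x : ∀ i, EuclideanSpace ℝ (Fin (n i))) (t : ℝ) :
    horoNormSq α (a • x) t = a ^ 2 * horoNormSq α x t := by
  rw [horoNormSq, horoNormSq, Finset.mul_sum]
  refine Finset.sum_congr rfl fun i _ => ?_
  rw [Pi.smul_apply, norm_smul, norm_eq_abs, mul_pow, sq_abs]
  ring

lemma horoNormSq_antitone (hα : ∀ i, 0 < α i) (x : ∀ i, EuclideanSpace ℝ (Fin (n i))) :
    Antitone (horoNormSq α x) := by
  intro s t hst
  apply Finset.sum_le_sum fun i _ => ?_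
  gcongr ?_ * _
  exact exp_le_exp.2 (by nlinarith [hα i])

lemma continuous_horoNormSq :
    Continuous fun z : (∀ i, EuclideanSpace ℝ (Fin (n i))) × ℝ => horoNormSq α z.1 z.2 := by
  unfold horoNormSq; fun_prop

end Horosphere

section PathLength

variable {r : ℕ} {n : Fin r → ℕ} (α : Fin r → ℝ)
  {c v : ℝ → (∀ i, EuclideanSpace ℝ (Fin (n i))) × ℝ}

lemma pathLength_eq_integral_horoNormSq :
    pathLength r n α c v = ∫ s in (0:ℝ)..1, √(horoNormSq α (v s).1 (c s).2 + (v s).2 ^ 2) :=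
  rfl

lemma pathLength_nonneg : 0 ≤ pathLength r n α c v :=
  integral_nonneg zero_le_one fun _ _ => sqrt_nonneg _

lemma intervalIntegrable_horoNormSq_path (hc : ContinuousOn c (Icc 0 1)) (hv : Continuous v) :
    IntervalIntegrable (fun s => √(horoNormSq α (v s).1 (c s).2 + (v s).2 ^ 2)) volume 0 1 := by
  refine ContinuousOn.intervalIntegrable_of_Icc zero_le_one ?_
  have hpair : ContinuousOn (fun s => ((v s).1, (c s).2)) (Icc 0 1) :=
    (continuous_fst.comp hv).continuousOn.prodMk (continuous_snd.comp_continuousOn hc)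
  exact (((continuous_horoNormSq α).comp_continuousOn hpair).add
    (hv.snd.pow 2).continuousOn).sqrt

lemma abs_sub_le_pathLength (hc : ∀ s ∈ Icc (0:ℝ) 1, HasDerivAt c (v s) s) (hv : Continuous v) :
    |(c 0).2 - (c 1).2| ≤ pathLength r n α c v := by
  have hcc : ContinuousOn c (Icc 0 1) := fun s hs => (hc s hs).continuousAt.continuousWithinAt
  have hheight : ∫ s in (0:ℝ)..1, (v s).2 = (c 1).2 - (c 0).2 := by
    refine integral_eq_sub_of_hasDerivAt (f := fun s => (c s).2) (fun s hs => ?_)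
      (hv.snd.intervalIntegrable 0 1)
    rw [uIcc_of_le zero_le_one] at hs
    exact hasFDerivAt_snd.comp_hasDerivAt s (hc s hs)
  calc |(c 0).2 - (c 1).2| = |∫ s in (0:ℝ)..1, (v s).2| := by rw [hheight, abs_sub_comm]
    _ ≤ ∫ s in (0:ℝ)..1, |(v s).2| := abs_integral_le_integral_abs zero_le_one
    _ ≤ pathLength r n α c v := by
      refine integral_mono_on zero_le_one (hv.snd.abs.intervalIntegrable 0 1)
        (intervalIntegrable_horoNormSq_path α hcc hv) fun s _ => ?_
      rw [← sqrt_sq_eq_abs]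
      exact sqrt_le_sqrt (le_add_of_nonneg_left (horoNormSq_nonneg α _ _))

variable {x y : (∀ i, EuclideanSpace ℝ (Fin (n i))) × ℝ}

lemma gdist_le_pathLength (h0 : c 0 = x) (h1 : c 1 = y)
    (hc : ∀ s ∈ Icc (0:ℝ) 1, HasDerivAt c (v s) s) (hv : Continuous v) :
    gdist r n α x y ≤ pathLength r n α c v :=
  csInf_le ⟨0, by rintro _ ⟨c', v', -, -, -, -, rfl⟩; exact pathLength_nonneg α⟩
    ⟨c, v, h0, h1, hc, hv, rfl⟩

lemma abs_sub_le_gdist (h0 : c 0 = x) (h1 : c 1 = y)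
    (hc : ∀ s ∈ Icc (0:ℝ) 1, HasDerivAt c (v s) s) (hv : Continuous v) :
    |x.2 - y.2| ≤ gdist r n α x y :=
  le_csInf ⟨_, c, v, h0, h1, hc, hv, rfl⟩ <| by
    rintro _ ⟨c', v', rfl, rfl, hc', hv', rfl⟩
    exact abs_sub_le_pathLength α hc' hv'

end PathLength

section SmoothStep

open Filter Topology

lemma deriv_smoothTransition_eq_zero {x : ℝ} (hx : x < 0 ∨ 1 < x) :
    deriv smoothTransition x = 0 := by
  rcases hx with hx | hx
  · have hconst : smoothTransition =ᶠ[𝓝 x] fun _ => 0 := by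
      filter_upwards [Iio_mem_nhds hx] with y hy using smoothTransition.zero_of_nonpos hy.le
    rw [hconst.deriv_eq, deriv_const]
  · have hconst : smoothTransition =ᶠ[𝓝 x] fun _ => 1 := by
      filter_upwards [Ioi_mem_nhds hx] with y hy using smoothTransition.one_of_one_le hy.le
    rw [hconst.deriv_eq, deriv_const]

/-- The smooth step from `0` to `1` over the `k`-th third `[k/3, (k+1)/3]` of the unit interval. -/
noncomputable def thirdStep (k s : ℝ) : ℝ := smoothTransition (3 * s - k)

noncomputable def thirdStepDeriv (k s : ℝ) : ℝ := 3 * deriv smoothTransition (3 * s - k)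

variable {k s : ℝ}

lemma hasDerivAt_thirdStep (k s : ℝ) : HasDerivAt (thirdStep k) (thirdStepDeriv k s) s := by
  have hinner : HasDerivAt (fun u : ℝ => 3 * u - k) 3 s := by
    simpa using ((hasDerivAt_id s).const_mul 3).sub_const k
  have houter :=
    ((smoothTransition.contDiff (n := 1)).differentiable one_ne_zero (3 * s - k)).hasDerivAt
  exact (houter.comp s hinner).congr_deriv (mul_comm _ _)

lemma continuous_thirdStepDeriv (k : ℝ) : Continuous (thirdStepDeriv k) :=
  continuous_const.mul <|
    ((smoothTransition.contDiff (n := 1)).continuous_deriv le_rfl).comp (by fun_prop)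

lemma thirdStepDeriv_nonneg (k s : ℝ) : 0 ≤ thirdStepDeriv k s :=
  mul_nonneg zero_le_three smoothTransition.monotone.deriv_nonneg

lemma thirdStep_of_le (h : 3 * s ≤ k) : thirdStep k s = 0 :=
  smoothTransition.zero_of_nonpos (by linarith)

lemma thirdStep_of_ge (h : k + 1 ≤ 3 * s) : thirdStep k s = 1 :=
  smoothTransition.one_of_one_le (by linarith)

lemma thirdStep_zero (hk : 0 ≤ k) : thirdStep k 0 = 0 :=
  thirdStep_of_le (by linarith)

lemma thirdStep_one (hk : k ≤ 2) : thirdStep k 1 = 1 :=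
  thirdStep_of_ge (by linarith)

lemma mem_of_thirdStepDeriv_ne_zero (h : thirdStepDeriv k s ≠ 0) :
    k ≤ 3 * s ∧ 3 * s ≤ k + 1 := by
  by_contra hout
  rw [not_and_or, not_le, not_le] at hout
  apply h
  rw [thirdStepDeriv, deriv_smoothTransition_eq_zero, mul_zero]
  rcases hout with h | h <;> [left; right] <;> linarith

end SmoothStep

section SlidePath

variable {r : ℕ} {n : Fin r → ℕ} (α : Fin r → ℝ) {p w : ∀ i, EuclideanSpace ℝ (Fin (n i))}
  {φ φ' τ τ' : ℝ → ℝ}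

lemma hasDerivAt_slidePath {s : ℝ} (hφ : HasDerivAt φ (φ' s) s) (hτ : HasDerivAt τ (τ' s) s) :
    HasDerivAt (fun s => (p + φ s • w, τ s)) (φ' s • w, τ' s) s :=
  ((hφ.smul_const w).const_add p).prodMk hτ

lemma pathLength_slidePath_le (hφ : ∀ s, HasDerivAt φ (φ' s) s)
    (hτ : ∀ s, HasDerivAt τ (τ' s) s) (hφ' : Continuous φ') (hτ' : Continuous τ')
    (hslide : ∀ s, φ' s ≠ 0 → horoNormSq α w (τ s) ≤ 1) :
    pathLength r n α (fun s => (p + φ s • w, τ s)) (fun s => (φ' s • w, τ' s)) ≤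
      ∫ s in (0:ℝ)..1, (|φ' s| + |τ' s|) := by
  have hc : ContinuousOn (fun s => (p + φ s • w, τ s)) (Icc 0 1) := fun s _ =>
    (hasDerivAt_slidePath (hφ s) (hτ s)).continuousAt.continuousWithinAt
  rw [pathLength_eq_integral_horoNormSq]
  refine integral_mono_on zero_le_one
    (intervalIntegrable_horoNormSq_path α hc ((hφ'.smul continuous_const).prodMk hτ'))
    ((hφ'.abs.add hτ'.abs).intervalIntegrable 0 1) fun s _ => ?_
  have hhoriz : φ' s ^ 2 * horoNormSq α w (τ s) ≤ |φ' s| ^ 2 := by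
    rw [sq_abs]
    by_cases h : φ' s = 0
    · simp [h]
    · exact mul_le_of_le_one_right (sq_nonneg _) (hslide s h)
  rw [horoNormSq_smul, sqrt_le_left (by positivity)]
  nlinarith [sq_abs (τ' s), abs_nonneg (φ' s), abs_nonneg (τ' s)]

end SlidePath

section RiseSlideFall

variable {t₁ t₂ m : ℝ}

lemma height_eq_of_thirdStepDeriv_ne_zero {s : ℝ} (h : thirdStepDeriv 1 s ≠ 0) :
    t₁ + (m - t₁) * thirdStep 0 s - (m - t₂) * thirdStep 2 s = m := by
  obtain ⟨hlo, hhi⟩ := mem_of_thirdStepDeriv_ne_zero h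
  rw [thirdStep_of_ge (by linarith), thirdStep_of_le (by linarith)]
  ring

lemma integral_abs_thirdStepDeriv_le (ht₁ : t₁ ≤ m) (ht₂ : t₂ ≤ m) :
    ∫ s in (0:ℝ)..1, (|thirdStepDeriv 1 s| +
      |(m - t₁) * thirdStepDeriv 0 s - (m - t₂) * thirdStepDeriv 2 s|) ≤
      (m - t₁) + (m - t₂) + 1 := by
  set G := fun s => thirdStep 1 s + (m - t₁) * thirdStep 0 s + (m - t₂) * thirdStep 2 s
  set G' := fun s => thirdStepDeriv 1 s + (m - t₁) * thirdStepDeriv 0 s +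
    (m - t₂) * thirdStepDeriv 2 s
  have hcont := continuous_thirdStepDeriv
  have hG'cont : Continuous G' := by fun_prop
  have hG : ∫ s in (0:ℝ)..1, G' s = (m - t₁) + (m - t₂) + 1 := by
    rw [integral_eq_sub_of_hasDerivAt (f := G) (fun s _ =>
      (((hasDerivAt_thirdStep 1 s).add ((hasDerivAt_thirdStep 0 s).const_mul _)).add
        ((hasDerivAt_thirdStep 2 s).const_mul _))) (hG'cont.intervalIntegrable 0 1)]
    norm_num [G, thirdStep_zero, thirdStep_one]
    ring
  refine hG ▸ integral_mono_on zero_le_one (Continuous.intervalIntegrable (by fun_prop) 0 1)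
    (hG'cont.intervalIntegrable 0 1) fun s _ => ?_
  have h0 := mul_nonneg (sub_nonneg.2 ht₁) (thirdStepDeriv_nonneg 0 s)
  have h2 := mul_nonneg (sub_nonneg.2 ht₂) (thirdStepDeriv_nonneg 2 s)
  have hheight : |(m - t₁) * thirdStepDeriv 0 s - (m - t₂) * thirdStepDeriv 2 s| ≤
      (m - t₁) * thirdStepDeriv 0 s + (m - t₂) * thirdStepDeriv 2 s :=
    abs_sub_le_iff.2 ⟨by linarith, by linarith⟩
  simp only [G', abs_of_nonneg (thirdStepDeriv_nonneg 1 s)]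
  linarith

/-- Rise vertically from height `t₁` to `m`, slide along the horosphere at height `m`,
then descend to `t₂`. -/
lemma exists_path_pathLength_le {r : ℕ} {n : Fin r → ℕ} (α : Fin r → ℝ)
    (p q : ∀ i, EuclideanSpace ℝ (Fin (n i))) (ht₁ : t₁ ≤ m) (ht₂ : t₂ ≤ m)
    (hm : horoNormSq α (q - p) m ≤ 1) :
    ∃ c v, c 0 = (p, t₁) ∧ c 1 = (q, t₂) ∧ (∀ s ∈ Icc (0:ℝ) 1, HasDerivAt c (v s) s) ∧
      Continuous v ∧ pathLength r n α c v ≤ (m - t₁) + (m - t₂) + 1 := by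
  set τ := fun s => t₁ + (m - t₁) * thirdStep 0 s - (m - t₂) * thirdStep 2 s
  set τ' := fun s => (m - t₁) * thirdStepDeriv 0 s - (m - t₂) * thirdStepDeriv 2 s
  have hτ : ∀ s, HasDerivAt τ (τ' s) s := fun s =>
    (((hasDerivAt_thirdStep 0 s).const_mul _).const_add t₁).sub
      ((hasDerivAt_thirdStep 2 s).const_mul _)
  have hτ' : Continuous τ' := by
    have := continuous_thirdStepDeriv; fun_prop
  have hslide : ∀ s, thirdStepDeriv 1 s ≠ 0 → horoNormSq α (q - p) (τ s) ≤ 1 := fun s hs => by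
    rwa [show τ s = m from height_eq_of_thirdStepDeriv_ne_zero hs]
  refine ⟨fun s => (p + thirdStep 1 s • (q - p), τ s),
    fun s => (thirdStepDeriv 1 s • (q - p), τ' s), by simp [τ, thirdStep_zero],
    by simp [τ, thirdStep_one], fun s _ => hasDerivAt_slidePath (hasDerivAt_thirdStep 1 s) (hτ s),
    ((continuous_thirdStepDeriv 1).smul continuous_const).prodMk hτ', ?_⟩
  exact (pathLength_slidePath_le α (hasDerivAt_thirdStep 1) hτ (continuous_thirdStepDeriv 1) hτ'
    hslide).trans (integral_abs_thirdStepDeriv_le ht₁ ht₂)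

end RiseSlideFall

theorem stmt_16_general (r : ℕ) (n : Fin r → ℕ) (α : Fin r → ℝ)
    (hα : ∀ i, 0 < α i)
    (p q : ∀ i, EuclideanSpace ℝ (Fin (n i)))
    (t₀ : ℝ) (ht₀ : (∑ i, Real.exp (-2 * t₀ * α i) * ‖p i - q i‖ ^ 2) = 1)
    (t₁ t₂ : ℝ) (h : t₀ ≤ t₁ ∨ t₀ ≤ t₂) :
    |t₁ - t₂| ≤ gdist r n α (p, t₁) (q, t₂) ∧
      gdist r n α (p, t₁) (q, t₂) ≤ |t₁ - t₂| + 1 := by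
  have ht₀m : t₀ ≤ max t₁ t₂ := h.elim (le_max_of_le_left ·) (le_max_of_le_right ·)
  have hhoro : horoNormSq α (q - p) (max t₁ t₂) ≤ 1 := by
    refine (horoNormSq_antitone α hα _ ht₀m).trans_eq ?_
    simpa only [horoNormSq, Pi.sub_apply, norm_sub_rev] using ht₀
  obtain ⟨c, v, h0, h1, hc, hv, hlen⟩ :=
    exists_path_pathLength_le α p q (le_max_left t₁ t₂) (le_max_right t₁ t₂) hhoro
  refine ⟨abs_sub_le_gdist α h0 h1 hc hv, (gdist_le_pathLength α h0 h1 hc hv).trans ?_⟩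
  linarith [max_sub_min_eq_abs' t₁ t₂, min_add_max t₁ t₂]

/-- Let `p ≠ q ∈ R^n ≅ ∂G_A \ {ξ₀}` with `D_e(p,q) = e^{t₀}`, i.e.
`|e^{-t₀ A}(p-q)| = 1`. If `t₁ ≥ t₀` or `t₂ ≥ t₀`, then
`|t₁ - t₂| ≤ d((p,t₁),(q,t₂)) ≤ |t₁ - t₂| + 1` in `G_A`. -/
theorem stmt_16 (r : ℕ) (hr : 0 < r) (n : Fin r → ℕ) (α : Fin r → ℝ)
    (hα : ∀ i, 0 < α i)
    (p q : ∀ i, EuclideanSpace ℝ (Fin (n i))) (hpq : p ≠ q)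
    (t₀ : ℝ) (ht₀ : (∑ i, Real.exp (-2 * t₀ * α i) * ‖p i - q i‖ ^ 2) = 1)
    (t₁ t₂ : ℝ) (h : t₀ ≤ t₁ ∨ t₀ ≤ t₂) :
    |t₁ - t₂| ≤ gdist r n α (p, t₁) (q, t₂) ∧
      gdist r n α (p, t₁) (q, t₂) ≤ |t₁ - t₂| + 1 :=
  stmt_16_general r n α hα p q t₀ ht₀ t₁ t₂ h
end

section
/- Let (X,d) be an unbounded metric space, p ∈ X, and define s_p on S_p(X) = X ∪ {∞} by s_p(x,y) = d(x,y)/[(1+d(x,p))(1+d(y,p))] for x,y ∈ X, s_p(x,∞) = 1/(1+d(x,p)), s_p(∞,∞) = 0. Then s_p is a quasimetric with relaxed triangle constant at most 2: s_p(x,z) ≤ 2(s_p(x,y) + s_p(y,z)) for all x, y, z ∈ S_p(X). -/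
/-- The sphericalization distance function `s_p` on `S_p(X) = X ∪ {∞}`
(modeled by `Option X`, with `∞ = none`). -/
noncomputable def sp {X : Type*} [MetricSpace X] (p : X) :
    Option X → Option X → ℝ
  | some x, some y => dist x y / ((1 + dist x p) * (1 + dist y p))
  | some x, none => 1 / (1 + dist x p)
  | none, some y => 1 / (1 + dist y p)
  | none, none => 0

/-! For finite points, with `A = 1 + d(x,p)`, `B = 1 + d(y,p)`, `C = 1 + d(z,p)`, the relaxed
triangle inequality becomes `d(x,z) B ≤ 2 (d(x,y) C + d(y,z) A)`. Bounding `B ≤ C + d(y,z)` and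
`B ≤ A + d(x,y)` in `d(x,z) B ≤ (d(x,y) + d(y,z)) B` gives the error term `2 d(x,y) d(y,z)`, and in
`d(x,z) B ≤ (A + C) B` the error term `2 A C`; by AM-GM the smaller of the two is at most
`d(x,y) C + d(y,z) A`. The cases involving `∞` are degenerate versions of the same estimates. -/

theorem mul_le_two_mul_add_mul_of_le_add {t u v A B C : ℝ} (hu : 0 ≤ u) (hv : 0 ≤ v)
    (hA : 0 ≤ A) (hB : 0 ≤ B) (hC : 0 ≤ C) (htuv : t ≤ u + v) (htAC : t ≤ A + C)
    (hBA : B ≤ A + u) (hBC : B ≤ C + v) :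
    t * B ≤ 2 * (u * C + v * A) := by
  have hsum : t * B ≤ u * C + v * A + 2 * (u * v) := by
    nlinarith [mul_le_mul_of_nonneg_left hBC hu, mul_le_mul_of_nonneg_left hBA hv]
  have hpoles : t * B ≤ u * C + v * A + 2 * (A * C) := by
    nlinarith [mul_le_mul_of_nonneg_left hBC hA, mul_le_mul_of_nonneg_left hBA hC]
  have amgm : 4 * ((u * v) * (A * C)) ≤ (u * C + v * A) ^ 2 := by
    nlinarith [sq_nonneg (u * C - v * A)]
  have hrhs : 0 ≤ u * C + v * A := by positivity
  rcases le_total (u * v) (A * C) with h | h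
  · have : 2 * (u * v) ≤ u * C + v * A :=
      le_of_sq_le_sq (by nlinarith [mul_le_mul_of_nonneg_left h (mul_nonneg hu hv)]) hrhs
    linarith
  · have : 2 * (A * C) ≤ u * C + v * A :=
      le_of_sq_le_sq (by nlinarith [mul_le_mul_of_nonneg_left h (mul_nonneg hA hC)]) hrhs
    linarith

theorem dist_mul_add_dist_le {X : Type*} [PseudoMetricSpace X] {k : ℝ} (hk : 0 ≤ k)
    (p x y z : X) :
    dist x z * (k + dist y p) ≤
      2 * (dist x y * (k + dist z p) + dist y z * (k + dist x p)) :=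
  mul_le_two_mul_add_mul_of_le_add dist_nonneg dist_nonneg (by positivity) (by positivity)
    (by positivity) (dist_triangle x y z)
    (by linarith [dist_triangle_right x z p])
    (by linarith [dist_triangle_left y p x])
    (by linarith [dist_triangle y z p])

section Sphericalization

variable {X : Type*} [MetricSpace X] (p : X)

theorem sp_comm (x y : Option X) : sp p x y = sp p y x := by
  rcases x with _ | a <;> rcases y with _ | b <;> simp only [sp, dist_comm, mul_comm]

theorem sp_nonneg (x y : Option X) : 0 ≤ sp p x y := by
  rcases x with _ | a <;> rcases y with _ | b <;> simp only [sp] <;> positivity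

theorem sp_some_none_le (a : X) (y : Option X) :
    sp p (some a) none ≤ 2 * (sp p (some a) y + sp p y none) := by
  have hA : 0 < 1 + dist a p := by positivity
  rcases y with _ | b
  · simp only [sp]
    linarith [one_div_pos.2 hA]
  · have hB : 0 < 1 + dist b p := by positivity
    have hBA : 1 + dist b p ≤ 2 * (dist a b + (1 + dist a p)) := by
      linarith [dist_triangle_left b p a, dist_nonneg (x := a) (y := b)]
    simp only [sp]
    calc 1 / (1 + dist a p) = (1 + dist b p) / ((1 + dist a p) * (1 + dist b p)) := by
          field_simp
      _ ≤ 2 * (dist a b + (1 + dist a p)) / ((1 + dist a p) * (1 + dist b p)) := by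
          gcongr
      _ = 2 * (dist a b / ((1 + dist a p) * (1 + dist b p)) + 1 / (1 + dist b p)) := by
          field_simp

theorem sp_some_some_le (a c : X) (y : Option X) :
    sp p (some a) (some c) ≤ 2 * (sp p (some a) y + sp p y (some c)) := by
  have hA : 0 < 1 + dist a p := by positivity
  have hC : 0 < 1 + dist c p := by positivity
  rcases y with _ | b
  · have hAC : dist a c ≤ 2 * ((1 + dist c p) + (1 + dist a p)) := by
      linarith [dist_triangle_right a c p]
    simp only [sp]
    calc dist a c / ((1 + dist a p) * (1 + dist c p))
        ≤ 2 * ((1 + dist c p) + (1 + dist a p)) / ((1 + dist a p) * (1 + dist c p)) := by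
          gcongr
      _ = 2 * (1 / (1 + dist a p) + 1 / (1 + dist c p)) := by
          field_simp
  · have hB : 0 < 1 + dist b p := by positivity
    simp only [sp]
    calc dist a c / ((1 + dist a p) * (1 + dist c p))
        = dist a c * (1 + dist b p) / ((1 + dist a p) * (1 + dist b p) * (1 + dist c p)) := by
          field_simp
      _ ≤ 2 * (dist a b * (1 + dist c p) + dist b c * (1 + dist a p)) /
            ((1 + dist a p) * (1 + dist b p) * (1 + dist c p)) := by
          gcongr ?_ / _
          exact dist_mul_add_dist_le zero_le_one p a b c
      _ = 2 * (dist a b / ((1 + dist a p) * (1 + dist b p)) +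
            dist b c / ((1 + dist b p) * (1 + dist c p))) := by
          field_simp

end Sphericalization

theorem stmt_19_general {X : Type*} [MetricSpace X] (p : X) :
    ∀ x y z : Option X, sp p x z ≤ 2 * (sp p x y + sp p y z) := by
  rintro (_ | a) y (_ | c)
  · simpa only [sp] using mul_nonneg zero_le_two (add_nonneg (sp_nonneg p _ y) (sp_nonneg p y _))
  · rw [sp_comm p none, sp_comm p none y, sp_comm p y (some c), add_comm]
    exact sp_some_none_le p c y
  · exact sp_some_none_le p a y
  · exact sp_some_some_le p a c y

/-- For an unbounded metric space `(X,d)` and `p ∈ X`, the sphericalization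
function `s_p` on `S_p(X) = X ∪ {∞}` is a quasimetric with relaxed triangle
constant at most `2`: `s_p(x,z) ≤ 2 (s_p(x,y) + s_p(y,z))`. -/
theorem stmt_19 {X : Type*} [MetricSpace X] (p : X)
    (hunbdd : ∀ R : ℝ, ∃ x : X, R ≤ dist x p) :
    ∀ x y z : Option X, sp p x z ≤ 2 * (sp p x y + sp p y z) :=
  stmt_19_general p
end
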